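/- arXiv:1405.4021 — 7 statements merged into one kernel-verified Lean document; each statement's English description precedes it below -/
import Mathlib

section
/- If an SLDDB-system S is correct with respect to a program P and query Q, then every computed answer tuple (c_1,...,c_m) of S over a database DB corresponds to a goal answer(c_1,...,c_m) that is derivable by a finite sequence of SLD-derivation steps from the extended query Q ∧ answer(X_1,...,X_m) using rules of P and facts of DB. Formally: for any finite state sequence s_0,...,s_n with s_0 the initial state, each consecutive pair related by an ε-transition or an F-transition with F ∈ DB, and answer(c_1,...,c_m) ∈ goals(s_n), there is an SLD-derivation of the goal answer(c_1,...,c_m) from the extended query using rules in P and facts in DB. -/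
/-! Any goal of a reachable state is derivable from the query: every transition pulls each goal
of its target state back, along a derivation, to some goal of its source state, so induction
along the state sequence ends at a goal of the initial state, which is derivable by correctness. -/

open Relation

theorem Relation.ReflTransGen.derivable_of_backward_simulation {σ α : Type*}
    {T : σ → σ → Prop} {R : α → α → Prop} {goals : σ → Set α} {q₀ : α} {s₀ s : σ}
    (hinit : ∀ g ∈ goals s₀, ReflTransGen R q₀ g)
    (hback : ∀ s₁ s₂, T s₁ s₂ → ∀ g₂ ∈ goals s₂, ∃ g₁ ∈ goals s₁, ReflTransGen R g₁ g₂)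
    (hreach : ReflTransGen T s₀ s) : ∀ g ∈ goals s, ReflTransGen R q₀ g := by
  induction hreach with
  | refl => exact hinit
  | tail _ hT ih =>
    intro g₂ hg₂
    obtain ⟨g₁, hg₁, hder⟩ := hback _ _ hT g₂ hg₂
    exact (ih g₁ hg₁).trans hder

theorem sld_simulation_correct_general
    {St G Fact Tuple : Type*}
    (step : Option Fact → G → G → Prop)
    (goals : St → Set G) (init : St)
    (epsTrans : St → St → Prop) (factTrans : Fact → St → St → Prop)
    (q0 : G) (answer : Tuple → G)
    (DB : Set Fact)
    (hinit : ∀ g ∈ goals init, Relation.ReflTransGen (step none) q0 g)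
    (heps : ∀ s1 s2, epsTrans s1 s2 → ∀ g2 ∈ goals s2, ∃ g1 ∈ goals s1,
      ∃ g', step none g1 g' ∧ g' ∈ goals s2 ∧ Relation.ReflTransGen (step none) g' g2)
    (hfact : ∀ F s1 s2, factTrans F s1 s2 → ∀ g2 ∈ goals s2, ∃ g1 ∈ goals s1,
      ∃ g', step (some F) g1 g' ∧ g' ∈ goals s2 ∧ Relation.ReflTransGen (step none) g' g2)
    (s : St)
    (hreach : Relation.ReflTransGen
      (fun s1 s2 => epsTrans s1 s2 ∨ ∃ F ∈ DB, factTrans F s1 s2) init s)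
    (c : Tuple) (hans : answer c ∈ goals s) :
    Relation.ReflTransGen
      (fun g g' => step none g g' ∨ ∃ F ∈ DB, step (some F) g g') q0 (answer c) := by
  have of_rules : ∀ {a b}, ReflTransGen (step none) a b →
      ReflTransGen (fun g g' => step none g g' ∨ ∃ F ∈ DB, step (some F) g g') a b :=
    ReflTransGen.mono (fun _ _ => Or.inl) _ _
  refine hreach.derivable_of_backward_simulation (fun g hg => of_rules (hinit g hg)) ?_ _ hans
  rintro s₁ s₂ (hε | ⟨F, hF, hF₁₂⟩) g₂ hg₂
  · obtain ⟨g₁, hg₁, g', hstep, -, hrules⟩ := heps s₁ s₂ hε g₂ hg₂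
    exact ⟨g₁, hg₁, .head (Or.inl hstep) (of_rules hrules)⟩
  · obtain ⟨g₁, hg₁, g', hstep, -, hrules⟩ := hfact F s₁ s₂ hF₁₂ g₂ hg₂
    exact ⟨g₁, hg₁, .head (Or.inr ⟨F, hF, hstep⟩) (of_rules hrules)⟩

/-- Correctness of SLD-simulation.
An SLDDB-system consists of states `St`, a goal set `goals s` for each state,
an initial state `init`, ε-transitions `epsTrans` and fact-transitions `factTrans F`.
If the system is correct w.r.t. the extended query `q0` (conditions `hinit`, `heps`, `hfact`),
then for every state sequence from `init` (using ε-transitions and transitions with facts in `DB`)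
whose final state contains `answer c`, there is an SLD-derivation of `answer c` from `q0`
using program-rule steps (`step none`) and fact steps with facts in `DB`. -/
theorem sld_simulation_correct
    {St G Fact Tuple : Type*}
    (step : Option Fact → G → G → Prop)
    (goals : St → Set G) (init : St)
    (epsTrans : St → St → Prop) (factTrans : Fact → St → St → Prop)
    (hne : ∀ s, (goals s).Nonempty)
    (q0 : G) (answer : Tuple → G)
    (DB : Set Fact)
    (hinit : ∀ g ∈ goals init, Relation.ReflTransGen (step none) q0 g)
    (heps : ∀ s1 s2, epsTrans s1 s2 → ∀ g2 ∈ goals s2, ∃ g1 ∈ goals s1,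
      ∃ g', step none g1 g' ∧ g' ∈ goals s2 ∧ Relation.ReflTransGen (step none) g' g2)
    (hfact : ∀ F s1 s2, factTrans F s1 s2 → ∀ g2 ∈ goals s2, ∃ g1 ∈ goals s1,
      ∃ g', step (some F) g1 g' ∧ g' ∈ goals s2 ∧ Relation.ReflTransGen (step none) g' g2)
    (s : St)
    (hreach : Relation.ReflTransGen
      (fun s1 s2 => epsTrans s1 s2 ∨ ∃ F ∈ DB, factTrans F s1 s2) init s)
    (c : Tuple) (hans : answer c ∈ goals s) :
    Relation.ReflTransGen
      (fun g g' => step none g g' ∨ ∃ F ∈ DB, step (some F) g g') q0 (answer c) :=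
  sld_simulation_correct_general step goals init epsTrans factTrans q0 answer DB hinit heps hfact s
    hreach c hans
end

section
/- If an SLDDB-system S is complete with respect to a program P and query Q (up to a goal-equivalence relation 'variant'), then for every SLD-derivation of a goal g from the extended query using rules of P and facts of a database DB, there exists a finite state sequence s_0,...,s_n of S starting from the initial state, with each transition either an ε-transition or an F-transition for some F ∈ DB, such that some variant of g belongs to goals(s_n) (or to goals(s_i) for some i ≤ n). -/
/-! Induction along the derivation, with the invariant "some variant of the current goal lies in
the goals of a reachable state". A derivation step from `g` is transported along the variant
`g ~ g''` by compatibility, and completeness of the system then supplies a variant of the result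
in the same state, after one ε-transition, or after one `F`-transition. -/

namespace Relation

theorem ReflTransGen.exists_of_simulation {α β : Type*} {r : α → α → Prop} {t : β → β → Prop}
    (sim : α → β → Prop) (hsim : ∀ a a' b, sim a b → r a a' → ∃ b', ReflTransGen t b b' ∧ sim a' b')
    {a a' : α} {b : β} (hab : sim a b) (h : ReflTransGen r a a') :
    ∃ b', ReflTransGen t b b' ∧ sim a' b' := by
  induction h with
  | refl => exact ⟨b, .refl, hab⟩
  | tail _ hstep ih =>
    obtain ⟨b₁, hb₁, hsim₁⟩ := ih
    obtain ⟨b₂, hb₂, hsim₂⟩ := hsim _ _ _ hsim₁ hstep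
    exact ⟨b₂, hb₁.trans hb₂, hsim₂⟩

end Relation

open Relation

section Simulation

variable {St G Fact : Type*} {step : Option Fact → G → G → Prop} {goals : St → Set G}
  {epsTrans : St → St → Prop} {factTrans : Fact → St → St → Prop} {variant : G → G → Prop}

def HasVariantIn (variant : G → G → Prop) (goals : St → Set G) (g : G) (s : St) : Prop :=
  ∃ g'', variant g g'' ∧ g'' ∈ goals s

theorem exists_step_hasVariantIn {DB : Set Fact} (hequiv : Equivalence variant)
    (hcompat : ∀ (o : Option Fact) g h g', variant g h → step o g g' →
      ∃ h', step o h h' ∧ variant g' h')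
    (heps : ∀ s g g', g ∈ goals s → step none g g' →
      ∃ g'', variant g' g'' ∧
        (g'' ∈ goals s ∨ ∃ s', epsTrans s s' ∧ g'' ∈ goals s'))
    (hfact : ∀ s g g' F, g ∈ goals s → step (some F) g g' →
      ∃ s' g'', factTrans F s s' ∧ variant g' g'' ∧ g'' ∈ goals s')
    {g g' : G} {s : St} (hg : HasVariantIn variant goals g s)
    (hstep : step none g g' ∨ ∃ F ∈ DB, step (some F) g g') :
    ∃ s', ReflTransGen (fun s₁ s₂ => epsTrans s₁ s₂ ∨ ∃ F ∈ DB, factTrans F s₁ s₂) s s' ∧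
      HasVariantIn variant goals g' s' := by
  obtain ⟨h, hvar, hmem⟩ := hg
  rcases hstep with hrule | ⟨F, hF, hfactStep⟩
  · obtain ⟨h', hstep', hvar'⟩ := hcompat none g h g' hvar hrule
    obtain ⟨g'', hvar'', hsame | ⟨s', hs', hmem'⟩⟩ := heps s h h' hmem hstep'
    · exact ⟨s, .refl, g'', hequiv.trans hvar' hvar'', hsame⟩
    · exact ⟨s', .single (.inl hs'), g'', hequiv.trans hvar' hvar'', hmem'⟩
  · obtain ⟨h', hstep', hvar'⟩ := hcompat (some F) g h g' hvar hfactStep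
    obtain ⟨s', g'', hs', hvar'', hmem'⟩ := hfact s h h' F hmem hstep'
    exact ⟨s', .single (.inr ⟨F, hF, hs'⟩), g'', hequiv.trans hvar' hvar'', hmem'⟩

end Simulation

theorem sld_simulation_complete_general
    {St G Fact : Type*}
    (step : Option Fact → G → G → Prop)
    (goals : St → Set G) (init : St)
    (epsTrans : St → St → Prop) (factTrans : Fact → St → St → Prop)
    (variant : G → G → Prop)
    (hequiv : Equivalence variant)
    (hcompat : ∀ (o : Option Fact) g h g', variant g h → step o g g' →
      ∃ h', step o h h' ∧ variant g' h')
    (q0 : G)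
    (DB : Set Fact)
    (hinit : q0 ∈ goals init)
    (heps : ∀ s g g', g ∈ goals s → step none g g' →
      ∃ g'', variant g' g'' ∧
        (g'' ∈ goals s ∨ ∃ s', epsTrans s s' ∧ g'' ∈ goals s'))
    (hfact : ∀ s g g' F, g ∈ goals s → step (some F) g g' →
      ∃ s' g'', factTrans F s s' ∧ variant g' g'' ∧ g'' ∈ goals s')
    (g : G)
    (hderiv : Relation.ReflTransGen
      (fun g g' => step none g g' ∨ ∃ F ∈ DB, step (some F) g g') q0 g) :
    ∃ s, Relation.ReflTransGen
        (fun s1 s2 => epsTrans s1 s2 ∨ ∃ F ∈ DB, factTrans F s1 s2) init s ∧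
      ∃ g'', variant g g'' ∧ g'' ∈ goals s :=
  hderiv.exists_of_simulation (HasVariantIn variant goals)
    (fun _ _ _ hg hstep => exists_step_hasVariantIn hequiv hcompat heps hfact hg hstep)
    ⟨q0, hequiv.refl q0, hinit⟩

/-- Completeness of SLD-simulation.
If an SLDDB-system is complete w.r.t. the extended query `q0`
(conditions `hinit`, `heps`, `hfact`), up to a goal-equivalence `variant`
compatible with the step relation, then for every SLD-derivation of a goal `g`
from `q0` using rules and facts of `DB`, there is a state sequence from `init`
(ε-transitions and transitions with facts of `DB`) whose final state contains
a variant of `g`. -/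
theorem sld_simulation_complete
    {St G Fact : Type*}
    (step : Option Fact → G → G → Prop)
    (goals : St → Set G) (init : St)
    (epsTrans : St → St → Prop) (factTrans : Fact → St → St → Prop)
    (hne : ∀ s, (goals s).Nonempty)
    (variant : G → G → Prop)
    (hequiv : Equivalence variant)
    (hcompat : ∀ (o : Option Fact) g h g', variant g h → step o g g' →
      ∃ h', step o h h' ∧ variant g' h')
    (q0 : G)
    (DB : Set Fact)
    (hinit : q0 ∈ goals init)
    (heps : ∀ s g g', g ∈ goals s → step none g g' →
      ∃ g'', variant g' g'' ∧
        (g'' ∈ goals s ∨ ∃ s', epsTrans s s' ∧ g'' ∈ goals s'))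
    (hfact : ∀ s g g' F, g ∈ goals s → step (some F) g g' →
      ∃ s' g'', factTrans F s s' ∧ variant g' g'' ∧ g'' ∈ goals s')
    (g : G)
    (hderiv : Relation.ReflTransGen
      (fun g g' => step none g g' ∨ ∃ F ∈ DB, step (some F) g g') q0 g) :
    ∃ s, Relation.ReflTransGen
        (fun s1 s2 => epsTrans s1 s2 ∨ ∃ F ∈ DB, factTrans F s1 s2) init s ∧
      ∃ g'', variant g g'' ∧ g'' ∈ goals s :=
  sld_simulation_complete_general step goals init epsTrans factTrans variant hequiv hcompat q0 DB
    hinit heps hfact g hderiv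
end

section
/- If a program P contains no facts with IDB head (every rule has a nonempty body) and has no left recursion (the predicate of the first body literal of each rule does not depend, directly or indirectly via the 'calls' relation through first body literals, on the predicate in the rule head), then cl_P(G) is finite for every finite set of goals G. -/
/-! A rule-only SLD step strictly descends in the first-literal call relation `≻`, which is
well-founded because it is acyclic on a finite set of predicates. So the step relation is
itself well-founded (read backwards) and finitely branching, and by well-founded induction
(König's lemma) every goal reaches only finitely many goals. -/

open Function Relation

theorem Finite.wellFounded_swap_of_irrefl_transGen {α : Type*} [Finite α]
    {r : α → α → Prop} [Std.Irrefl (TransGen r)] : WellFounded (swap r) := by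
  have : Std.Irrefl (TransGen (swap r)) := ⟨fun a h => irrefl a (transGen_swap.mp h)⟩
  have : IsTrans α (TransGen (swap r)) := ⟨fun _ _ _ => .trans⟩
  exact Subrelation.wf TransGen.single (Finite.wellFounded_of_trans_of_irrefl _)

theorem Set.finite_setOf_reflTransGen {α : Type*} {r : α → α → Prop}
    (hwf : WellFounded (swap r)) (hbranch : ∀ a, {b | r a b}.Finite) (a : α) :
    {b | ReflTransGen r a b}.Finite := by
  induction a using hwf.induction with
  | _ a ih =>
    have hsub : {b | ReflTransGen r a b} ⊆ {a} ∪ ⋃ c ∈ {c | r a c}, {b | ReflTransGen r c b} := by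
      intro b hab
      rcases hab.cases_head with rfl | ⟨c, hac, hcb⟩
      · exact Or.inl rfl
      · exact Or.inr (Set.mem_biUnion hac hcb)
    exact ((Set.finite_singleton a).union ((hbranch a).biUnion ih)).subset hsub

/-- If the program has no IDB facts (every rule-only SLD step
replaces the leading literal by a nonempty body, so every step determines a
first-literal predicate) and no left recursion (the first-literal call
relation `succ` on the finite predicate set has irreflexive transitive
closure), then `cl_P(S)` is finite for every finite set of goals `S`.
Here `fp g` is the predicate of the first literal of goal `g`, every
rule-only step leads from a goal with first predicate `p` to one with first
predicate `q` where `p ≻ q` (`hfp`), and each goal has only finitely many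
successor goals (finitely many rules and mgus). -/
theorem cl_finite_of_no_left_recursion {G Pred : Type*} [Fintype Pred]
    (step : G → G → Prop) (norm : G → G)
    (succ : Pred → Pred → Prop)
    (hnlr : Irreflexive (Relation.TransGen succ))
    (fp : G → Pred)
    (hfp : ∀ g g', step g g' → succ (fp g) (fp g'))
    (hbranch : ∀ g, {g' | step g g'}.Finite)
    (S : Set G) (hS : S.Finite) :
    {x | ∃ g ∈ S, ∃ g', Relation.ReflTransGen step g g' ∧ x = norm g'}.Finite := by
  have : Std.Irrefl (TransGen succ) := ⟨hnlr⟩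
  have hwf : WellFounded (swap step) :=
    Subrelation.wf (fun h => hfp _ _ h)
      (InvImage.wf fp (Finite.wellFounded_swap_of_irrefl_transGen))
  have hcl : {x | ∃ g ∈ S, ∃ g', ReflTransGen step g g' ∧ x = norm g'} =
      ⋃ g ∈ S, norm '' {g' | ReflTransGen step g g'} := by
    ext x
    simp [eq_comm]
  rw [hcl]
  exact hS.biUnion fun g _ => (Set.finite_setOf_reflTransGen hwf hbranch g).image norm
end

section
/- If a program is at most tail-recursive, then the lengths of goals occurring in any SLD-derivation from a fixed query are bounded; consequently, over a fixed finite set of constants, only finitely many normalized goals occur, and the SLDDB-system with single-goal states and duplicate elimination (no repeated states in a sequence) admits only finitely many states and all state sequences have bounded length (termination). -/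
/-!
Give the literal at position `i` of a goal the potential "number of literals after it plus
`c · level`", where `c` bounds the body lengths. Resolving the leading literal `L` with a body `B`
does not raise the maximal potential: the last literal of `B` keeps `L`'s distance to the end and
has level at most `level L`, while each earlier literal is at most `c` positions further from the
end but at least one level lower. So the potential of the initial goal bounds the length of every
reachable goal; over a finite vocabulary only finitely many goals are then reachable, and a
duplicate-free sequence of them is no longer than their number.
-/

section Potential

variable {α : Type*} (w : α → ℕ) (c : ℕ)

def PotentialLE (C : ℕ) (g : List α) : Prop :=
  ∀ i (hi : i < g.length), g.length - 1 - i + c * w g[i] ≤ C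

variable {w c}

theorem exists_potentialLE (g : List α) : ∃ C, PotentialLE w c C g :=
  ⟨Finset.univ.sup fun i : Fin g.length => g.length - 1 - i + c * w g[i],
    fun i hi => Finset.le_sup (f := fun i : Fin g.length => g.length - 1 - i + c * w g[i])
      (Finset.mem_univ ⟨i, hi⟩)⟩

theorem PotentialLE.length_le {C : ℕ} {g : List α} (h : PotentialLE w c C g) :
    g.length ≤ C + 1 := by
  cases g with
  | nil => simp
  | cons L R =>
    have := h 0 (by simp)
    simp only [List.length_cons] at this ⊢
    omega

theorem potentialLE_map {β : Type*} (f : β → α) {C : ℕ} {g : List β} :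
    PotentialLE w c C (g.map f) ↔ PotentialLE (w ∘ f) c C g := by
  simp [PotentialLE]

theorem potentialLE_of_dropLast_lt {n : ℕ} {B : List α} (hB : B.length ≤ c + 1)
    (hinit : ∀ x ∈ B.dropLast, w x < n) (hlast : ∀ x ∈ B.getLast?, w x ≤ n) :
    PotentialLE w c (c * n) B := by
  intro i hi
  rcases Nat.lt_or_ge i (B.length - 1) with hlt | hge
  · have hmem : B[i] ∈ B.dropLast := by
      rw [← List.getElem_dropLast (by simpa using hlt)]
      exact List.getElem_mem _
    have := Nat.mul_le_mul_left c (hinit _ hmem)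
    rw [Nat.mul_succ] at this
    omega
  · have hmem : B[i] ∈ B.getLast? := by
      rw [List.getLast?_eq_getElem?, show B.length - 1 = i by omega, List.getElem?_eq_getElem hi]
      rfl
    have := Nat.mul_le_mul_left c (hlast _ hmem)
    omega

theorem PotentialLE.append {C : ℕ} {L : α} {R B : List α} (hg : PotentialLE w c C (L :: R))
    (hB : PotentialLE w c (c * w L) B) : PotentialLE w c C (B ++ R) := by
  intro i hi
  have hhead := hg 0 (by simp)
  simp only [List.length_append, List.length_cons] at hi hhead ⊢
  rcases Nat.lt_or_ge i B.length with hiB | hiB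
  · have := hB i hiB
    rw [List.getElem_cons_zero] at hhead
    rw [List.getElem_append_left hiB]
    omega
  · have := hg (i - B.length + 1) (by simp only [List.length_cons]; omega)
    rw [List.getElem_append_right hiB]
    simp only [List.length_cons, List.getElem_cons_succ] at this
    omega

end Potential

theorem List.Nodup.length_le_of_forall_mem_finite {α : Type*} {l : List α} {S : Set α}
    (hS : S.Finite) (hl : l.Nodup) (hlS : ∀ x ∈ l, x ∈ S) : l.length ≤ hS.toFinset.card := by
  classical
  rw [← List.toFinset_card_of_nodup hl]
  exact Finset.card_le_card fun x hx => hS.mem_toFinset.mpr (hlS x (List.mem_toFinset.mp hx))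

/-- At most tail-recursive programs have bounded goal lengths.
Goals are lists of literals over a finite vocabulary `Lit` (finitely many
predicates, constants, normalized variables).  Each rule `r ∈ rules` has a
head predicate `r.1` and body `r.2`; a level function witnesses the
stratification: all body literals except possibly the last have strictly
smaller level than the head, the last has level at most that of the head
(tail recursion only).  An SLD step replaces the leading literal by an
instance of a matching rule body (same predicate list).  Then: goal lengths
in derivations from `g0` are bounded, only finitely many goals are reachable,
and state sequences without repeated states have bounded length
(termination). -/
theorem tail_recursion_bounded_goals_and_termination
    {Lit Pred : Type*} [Fintype Lit]
    (pred : Lit → Pred)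
    (rules : Set (Pred × List Lit)) (hrules : rules.Finite)
    (level : Pred → ℕ)
    (htail : ∀ r ∈ rules, ∀ L ∈ r.2.dropLast, level (pred L) < level r.1)
    (hlast : ∀ r ∈ rules, ∀ L ∈ r.2.getLast?, level (pred L) ≤ level r.1)
    (step : List Lit → List Lit → Prop)
    (hstep : ∀ g g', step g g' ↔ ∃ (L : Lit) (R B : List Lit),
      g = L :: R ∧ g' = B ++ R ∧
      ∃ r ∈ rules, r.1 = pred L ∧ B.map pred = r.2.map pred)
    (g0 : List Lit) :
    (∃ Bnd : ℕ, ∀ g, Relation.ReflTransGen step g0 g → g.length ≤ Bnd) ∧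
    {g | Relation.ReflTransGen step g0 g}.Finite ∧
    (∃ N : ℕ, ∀ l : List (List Lit),
      (∀ g ∈ l, Relation.ReflTransGen step g0 g) → l.Chain' step → l.Nodup →
      l.length ≤ N) := by
  set c := hrules.toFinset.sup fun r => r.2.length
  have hbody : ∀ r ∈ rules, PotentialLE level c (c * level r.1) (r.2.map pred) := fun r hr =>
    (potentialLE_map pred).2 <| potentialLE_of_dropLast_lt
      ((Finset.le_sup (f := fun r => r.2.length) (hrules.mem_toFinset.2 hr)).trans c.le_succ)
      (htail r hr) (hlast r hr)
  have hpreserve : ∀ {C g g'}, step g g' →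
      PotentialLE (level ∘ pred) c C g → PotentialLE (level ∘ pred) c C g' := by
    intro C g g' hgg' hg
    obtain ⟨L, R, B, rfl, rfl, r, hr, hhead, hmap⟩ := (hstep g g').1 hgg'
    refine hg.append ((potentialLE_map pred).1 ?_)
    rw [hmap, Function.comp_apply, ← hhead]
    exact hbody r hr
  obtain ⟨C, hC⟩ := exists_potentialLE (w := level ∘ pred) (c := c) g0
  have hreach : ∀ g, Relation.ReflTransGen step g0 g → PotentialLE (level ∘ pred) c C g := by
    intro g hg
    induction hg with
    | refl => exact hC
    | tail _ hs ih => exact hpreserve hs ih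
  have hlen : ∀ g, Relation.ReflTransGen step g0 g → g.length ≤ C + 1 := fun g hg =>
    (hreach g hg).length_le
  have hfin : {g | Relation.ReflTransGen step g0 g}.Finite :=
    (List.finite_length_le Lit (C + 1)).subset hlen
  exact ⟨⟨C + 1, hlen⟩, hfin,
    ⟨hfin.toFinset.card, fun l hl _ hnodup => hnodup.length_le_of_forall_mem_finite hfin hl⟩⟩
end

section
/- Maximal-state transitions process one database fact per step, and this is optimal in the following sense: if a state sequence s_0, s_1, ..., s_n of the maximal-states SLDDB-system computes an answer using transitions labeled by facts F_1, ..., F_n ∈ DB, then there is an SLD-refutation of the extended query that uses exactly the facts F_1, ..., F_n in that order (and uses each transition's fact exactly once). -/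
namespace MaxStates10

variable {G Fact : Type*}

/-- Rule-only closure followed by normalization: `cl_P`. -/
def cl (step : Option Fact → G → G → Prop) (norm : G → G) (S : Set G) : Set G :=
  {x | ∃ g ∈ S, ∃ g', Relation.ReflTransGen (step none) g g' ∧ x = norm g'}

/-- Successor state of the maximal-states construction for fact `F`. -/
def succState (step : Option Fact → G → G → Prop) (norm : G → G)
    (s : Set G) (F : Fact) : Set G :=
  cl step norm {g' | ∃ g ∈ s, step (some F) g g'}

/-- State reached from `s₀ = cl_P({q0})` by the transitions labeled with the
facts `fs` (in order). -/
def stateAt (step : Option Fact → G → G → Prop) (norm : G → G)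
    (q0 : G) (fs : List Fact) : Set G :=
  fs.foldl (succState step norm) (cl step norm {q0})

/-- SLD-derivations recording the list of facts used (in order);
`Deriv step fs g g'` means `g →* g'` where the fact-steps use exactly the
facts `fs`, in that order, each exactly once. -/
inductive Deriv (step : Option Fact → G → G → Prop) : List Fact → G → G → Prop
  | refl (g : G) : Deriv step [] g g
  | rule {g g' g'' : G} {fs : List Fact} :
      step none g g' → Deriv step fs g' g'' → Deriv step fs g g''
  | fact {g g' g'' : G} {fs : List Fact} (F : Fact) :
      step (some F) g g' → Deriv step fs g' g'' → Deriv step (F :: fs) g g''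

/-! Every goal in the state reached by `F₁, …, Fᵢ` is the normal form of a goal that the
extended query derives using exactly the facts `F₁, …, Fᵢ`. Since steps commute with
normalization, a step taken from a goal in a state can be replayed from the end of that
derivation, which propagates the invariant along each transition. -/

theorem Deriv.append {step : Option Fact → G → G → Prop} {fs fs' : List Fact}
    {g g' g'' : G} (h : Deriv step fs g g') (h' : Deriv step fs' g' g'') :
    Deriv step (fs ++ fs') g g'' := by
  induction h with
  | refl => exact h'
  | rule hs _ ih => exact Deriv.rule hs (ih h')
  | fact F hs _ ih => exact Deriv.fact F hs (ih h')

theorem Deriv.of_reflTransGen {step : Option Fact → G → G → Prop} {g g' : G}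
    (h : Relation.ReflTransGen (step none) g g') : Deriv step [] g g' := by
  induction h using Relation.ReflTransGen.head_induction_on with
  | refl => exact Deriv.refl _
  | head hs _ ih => exact Deriv.rule hs ih

theorem _root_.Relation.ReflTransGen.exists_of_norm_eq {r : G → G → Prop} {norm : G → G}
    (hsim : ∀ g h g', norm g = norm h → r g g' → ∃ h', r h h' ∧ norm h' = norm g')
    {a a' b : G} (h : Relation.ReflTransGen r a a') (hab : norm a = norm b) :
    ∃ b', Relation.ReflTransGen r b b' ∧ norm b' = norm a' := by
  induction h with
  | refl => exact ⟨b, .refl, hab.symm⟩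
  | tail _ hs ih =>
    obtain ⟨b', hbb', hb'⟩ := ih
    obtain ⟨b'', hs', hb''⟩ := hsim _ b' _ hb'.symm hs
    exact ⟨b'', hbb'.tail hs', hb''⟩

section Invariant

variable {step : Option Fact → G → G → Prop} {norm : G → G} {q0 : G}

theorem cl_subset_image_deriv
    (hcomm : ∀ (o : Option Fact) g h g', norm g = norm h → step o g g' →
      ∃ h', step o h h' ∧ norm h' = norm g')
    {S : Set G} {ps : List Fact} (hS : ∀ g ∈ S, ∃ h, Deriv step ps q0 h ∧ norm h = norm g) :
    cl step norm S ⊆ norm '' {h | Deriv step ps q0 h} := by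
  rintro _ ⟨g, hg, g', hgg', rfl⟩
  obtain ⟨h, hderiv, hnorm⟩ := hS g hg
  obtain ⟨h', hhh', hnorm'⟩ := hgg'.exists_of_norm_eq (hcomm none) hnorm.symm
  exact ⟨h', by simpa using hderiv.append (Deriv.of_reflTransGen hhh'), hnorm'⟩

theorem succState_subset_image_deriv (hidem : ∀ g, norm (norm g) = norm g)
    (hcomm : ∀ (o : Option Fact) g h g', norm g = norm h → step o g g' →
      ∃ h', step o h h' ∧ norm h' = norm g')
    {s : Set G} {ps : List Fact} (hs : s ⊆ norm '' {h | Deriv step ps q0 h}) (F : Fact) :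
    succState step norm s F ⊆ norm '' {h | Deriv step (ps ++ [F]) q0 h} := by
  refine cl_subset_image_deriv hcomm ?_
  rintro g' ⟨_, hg, hstep⟩
  obtain ⟨h, hderiv, rfl⟩ := hs hg
  obtain ⟨h', hstep', hnorm'⟩ := hcomm (some F) _ h g' (hidem h) hstep
  exact ⟨h', hderiv.append (Deriv.fact F hstep' (Deriv.refl _)), hnorm'⟩

theorem foldl_succState_subset_image_deriv (hidem : ∀ g, norm (norm g) = norm g)
    (hcomm : ∀ (o : Option Fact) g h g', norm g = norm h → step o g g' →
      ∃ h', step o h h' ∧ norm h' = norm g')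
    (fs : List Fact) {s : Set G} {ps : List Fact}
    (hs : s ⊆ norm '' {h | Deriv step ps q0 h}) :
    fs.foldl (succState step norm) s ⊆ norm '' {h | Deriv step (ps ++ fs) q0 h} := by
  induction fs generalizing s ps with
  | nil => simpa using hs
  | cons F fs ih =>
    simpa using ih (succState_subset_image_deriv hidem hcomm hs F)

theorem stateAt_subset_image_deriv (hidem : ∀ g, norm (norm g) = norm g)
    (hcomm : ∀ (o : Option Fact) g h g', norm g = norm h → step o g g' →
      ∃ h', step o h h' ∧ norm h' = norm g')
    (fs : List Fact) :
    stateAt step norm q0 fs ⊆ norm '' {h | Deriv step fs q0 h} := by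
  have hinit : cl step norm {q0} ⊆ norm '' {h | Deriv step [] q0 h} :=
    cl_subset_image_deriv hcomm fun g hg => ⟨g, hg ▸ Deriv.refl _, rfl⟩
  simpa only [stateAt, List.nil_append] using
    foldl_succState_subset_image_deriv hidem hcomm fs hinit

end Invariant

theorem maximal_states_use_facts_exactly_general
    {Tuple : Type*}
    (step : Option Fact → G → G → Prop) (norm : G → G)
    (q0 : G) (answer : Tuple → G)
    (hidem : ∀ g, norm (norm g) = norm g)
    (hcomm : ∀ (o : Option Fact) g h g', norm g = norm h → step o g g' →
      ∃ h', step o h h' ∧ norm h' = norm g')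
    (fs : List Fact) (t : Tuple)
    (hcomputed : answer t ∈ stateAt step norm q0 fs) :
    ∃ g, Deriv step fs q0 g ∧ norm g = answer t :=
  stateAt_subset_image_deriv hidem hcomm fs hcomputed

/-- one database fact is processed per maximal-state transition,
and this matches SLD-resolution exactly: if the state sequence with transition
labels `F₁,...,Fₙ` computes an answer (the final state contains the ground
answer goal `answer t`), then there is an SLD-refutation of the extended query
`q0` reaching the answer goal which uses exactly the facts `F₁,...,Fₙ`, in
that order. -/
theorem maximal_states_use_facts_exactly
    {Tuple : Type*}
    (step : Option Fact → G → G → Prop) (norm : G → G)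
    (q0 : G) (answer : Tuple → G)
    (hidem : ∀ g, norm (norm g) = norm g)
    (hq0 : norm q0 = q0)
    (hans : ∀ t, norm (answer t) = answer t)
    (hcomm : ∀ (o : Option Fact) g h g', norm g = norm h → step o g g' →
      ∃ h', step o h h' ∧ norm h' = norm g')
    (fs : List Fact) (t : Tuple)
    (hcomputed : answer t ∈ stateAt step norm q0 fs) :
    ∃ g, Deriv step fs q0 g ∧ norm g = answer t :=
  maximal_states_use_facts_exactly_general step norm q0 answer hidem hcomm fs t hcomputed

end MaxStates10
end

section
/- The maximal-states construction is complete: for every SLD-derivation g₀ →* g from the extended query g₀ using rule-steps and fact-steps with facts F₁,...,F_k (in order of use), the state s_k reached from s₀ by the transitions labeled F₁,...,F_k in the maximal-states system contains norm(g). -/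
/-!
Rule steps never leave a `cl_P`-closed state: because normalization commutes with steps, a
rule step from `g` can be replayed from the goal whose normal form witnesses `norm g` in the
state, extending its rule-only derivation. A fact step with `F` from `g` can be replayed from
`norm g` itself (idempotence of `norm`), which is an element of the current state, so `norm`
of its result lies in the `F`-successor state. Induction on the derivation along these two
cases gives the theorem.
-/

namespace MaxStates11

variable {G Fact : Type*}

/-- Rule-only closure followed by normalization: `cl_P`. -/
def cl (step : Option Fact → G → G → Prop) (norm : G → G) (S : Set G) : Set G :=
  {x | ∃ g ∈ S, ∃ g', Relation.ReflTransGen (step none) g g' ∧ x = norm g'}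

/-- Successor state of the maximal-states construction for fact `F`. -/
def succState (step : Option Fact → G → G → Prop) (norm : G → G)
    (s : Set G) (F : Fact) : Set G :=
  cl step norm {g' | ∃ g ∈ s, step (some F) g g'}

/-- State reached from `s₀ = cl_P({q0})` by the transitions labeled with the
facts `fs` (in order). -/
def stateAt (step : Option Fact → G → G → Prop) (norm : G → G)
    (q0 : G) (fs : List Fact) : Set G :=
  fs.foldl (succState step norm) (cl step norm {q0})

/-- SLD-derivations recording the list of facts used (in order). -/
inductive Deriv (step : Option Fact → G → G → Prop) : List Fact → G → G → Prop
  | refl (g : G) : Deriv step [] g g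
  | rule {g g' g'' : G} {fs : List Fact} :
      step none g g' → Deriv step fs g' g'' → Deriv step fs g g''
  | fact {g g' g'' : G} {fs : List Fact} (F : Fact) :
      step (some F) g g' → Deriv step fs g' g'' → Deriv step (F :: fs) g g''

def NormCommutesWithStep (step : Option Fact → G → G → Prop) (norm : G → G) : Prop :=
  ∀ (o : Option Fact) g h g', norm g = norm h → step o g g' → ∃ h', step o h h' ∧ norm h' = norm g'

section

variable {step : Option Fact → G → G → Prop} {norm : G → G}

theorem norm_mem_cl_of_step_none
    (hcomm : NormCommutesWithStep step norm)
    {S : Set G} {g g' : G} (hg : norm g ∈ cl step norm S) (hstep : step none g g') :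
    norm g' ∈ cl step norm S := by
  obtain ⟨g₀, hg₀, g₁, hreach, hnorm⟩ := hg
  obtain ⟨h', hstep', hnorm'⟩ := hcomm none g g₁ g' hnorm hstep
  exact ⟨g₀, hg₀, h', hreach.tail hstep', hnorm'.symm⟩

theorem norm_mem_succState_of_step
    (hidem : ∀ g, norm (norm g) = norm g)
    (hcomm : NormCommutesWithStep step norm)
    {s : Set G} {F : Fact} {g g' : G} (hg : norm g ∈ s) (hstep : step (some F) g g') :
    norm g' ∈ succState step norm s F := by
  obtain ⟨h', hstep', hnorm'⟩ := hcomm (some F) g (norm g) g' (hidem g).symm hstep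
  exact ⟨h', ⟨norm g, hg, hstep'⟩, h', .refl, hnorm'.symm⟩

theorem Deriv.norm_mem_foldl_succState
    (hidem : ∀ g, norm (norm g) = norm g)
    (hcomm : NormCommutesWithStep step norm)
    {fs : List Fact} {g g'' : G} (hderiv : Deriv step fs g g'') :
    ∀ {S : Set G}, norm g ∈ cl step norm S →
      norm g'' ∈ fs.foldl (succState step norm) (cl step norm S) := by
  induction hderiv with
  | refl => exact id
  | rule hstep _ ih => exact fun hg => ih (norm_mem_cl_of_step_none hcomm hg hstep)
  | fact _ hstep _ ih => exact fun hg => ih (norm_mem_succState_of_step hidem hcomm hg hstep)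

end

/-- completeness of the maximal-states construction.  For every
SLD-derivation `q0 →* g` whose fact-steps use the facts `F₁,...,F_k` in order,
the state reached from `s₀ = cl_P({q0})` by the transitions labeled
`F₁,...,F_k` contains `norm g`.  (Normalization commutes with SLD steps.) -/
theorem maximal_states_complete
    (step : Option Fact → G → G → Prop) (norm : G → G)
    (q0 : G)
    (hidem : ∀ g, norm (norm g) = norm g)
    (hcomm : ∀ (o : Option Fact) g h g', norm g = norm h → step o g g' →
      ∃ h', step o h h' ∧ norm h' = norm g')
    (fs : List Fact) (g : G)
    (hderiv : Deriv step fs q0 g) :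
    norm g ∈ stateAt step norm q0 fs := by
  exact hderiv.norm_mem_foldl_succState hidem hcomm ⟨q0, rfl, q0, .refl, rfl⟩

end MaxStates11
end

section
/- If the states of an SLDDB-system form a finite set and duplicate states within a sequence are disallowed, then the set of computed answer tuples over any database DB is computable by a terminating procedure, and every answer is witnessed by a state sequence of length at most |Σ|. -/
/-!
A computing sequence is a path from `s0` in the transition graph on states. A path from `a`
whose tail already visits `a` can be restarted at that later visit without changing its
endpoint, so every reachable state is reached by a repetition-free path, and such a path
has at most `|Σ|` states.
-/

namespace List

variable {α : Type*} {r : α → α → Prop} {a b : α}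

theorem exists_isChain_cons_nodup_of_relationReflTransGen (h : Relation.ReflTransGen r a b) :
    ∃ l, IsChain r (a :: l) ∧ (a :: l).Nodup ∧ (a :: l).getLast (cons_ne_nil _ _) = b := by
  induction h using Relation.ReflTransGen.head_induction_on with
  | refl => exact ⟨[], .singleton _, nodup_singleton _, rfl⟩
  | @head a c hac _ ih =>
    obtain ⟨l, hchain, hnodup, hlast⟩ := ih
    by_cases ha : a ∈ c :: l
    · obtain ⟨p, q, hpq⟩ := append_of_mem ha
      have hsuffix : a :: q <:+ c :: l := ⟨p, hpq.symm⟩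
      refine ⟨q, hchain.suffix hsuffix, hnodup.sublist hsuffix.sublist, ?_⟩
      rw [← hlast]
      simp only [hpq, getLast_append_of_ne_nil _ (cons_ne_nil a q)]
    · exact ⟨c :: l, hchain.cons_cons hac, nodup_cons.2 ⟨ha, hnodup⟩, by rwa [getLast_cons_cons]⟩

theorem exists_isChain_cons_length_le_card_of_relationReflTransGen [Fintype α]
    (h : Relation.ReflTransGen r a b) :
    ∃ l, IsChain r (a :: l) ∧ (a :: l).length ≤ Fintype.card α ∧
      (a :: l).getLast (cons_ne_nil _ _) = b :=
  let ⟨l, hchain, hnodup, hlast⟩ := exists_isChain_cons_nodup_of_relationReflTransGen h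
  ⟨l, hchain, hnodup.length_le_card, hlast⟩

end List

/-- if the state set of an SLDDB-system is finite (and the
database is finite), the computed answers can be found by a terminating,
finite search: an answer tuple `t` is computed by some state sequence iff it
is computed by a state sequence of length at most `|Σ|` (without loss of
generality repetition-free), so the set of computed answers is obtained as a
finite union over the finitely many such sequences. -/
theorem finite_states_terminating_search
    {St G Fact Tuple : Type*} [Fintype St]
    (goals : St → Set G)
    (epsTrans : St → St → Prop) (factTrans : Fact → St → St → Prop)
    (DB : Set Fact)
    (s0 : St) (answer : Tuple → G) :
    ∀ t : Tuple,
      (∃ l : List St,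
        List.Chain (fun s s' => epsTrans s s' ∨ ∃ F ∈ DB, factTrans F s s') s0 l ∧
        answer t ∈ goals ((s0 :: l).getLast (by simp))) ↔
      (∃ l : List St,
        List.Chain (fun s s' => epsTrans s s' ∨ ∃ F ∈ DB, factTrans F s s') s0 l ∧
        (s0 :: l).length ≤ Fintype.card St ∧
        answer t ∈ goals ((s0 :: l).getLast (by simp))) := by
  intro t
  constructor
  · rintro ⟨l, hchain, hgoal⟩
    obtain ⟨l', hchain', hlength, hlast⟩ :=
      List.exists_isChain_cons_length_le_card_of_relationReflTransGen
        (List.relationReflTransGen_of_exists_isChain_cons l hchain rfl)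
    exact ⟨l', hchain', hlength, hlast ▸ hgoal⟩
  · rintro ⟨l, hchain, -, hgoal⟩
    exact ⟨l, hchain, hgoal⟩
end
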